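/- Let T be a finite metric tree (a quantum graph whose underlying graph is a tree) with no vertices of degree 2. Then T is determined up to isometry by the matrix of pairwise distances between its leaves: if two such trees have leaf sets in bijection so that corresponding leaf-distances agree, the trees are isomorphic as metric graphs (same underlying combinatorial tree and same edge lengths). -/

import Mathlib

/-- A finite multigraph: each edge is assigned an ordered pair of endpoints. -/
structure Multigraph (V E : Type) where
  ends : E → V × V

namespace Multigraph

variable {V E : Type} (G : Multigraph V E)

/-- `u` and `v` are joined by an edge in `S`. -/
def Adj (S : Set E) (u v : V) : Prop :=
  ∃ e ∈ S, G.ends e = (u, v) ∨ G.ends e = (v, u)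

/-- The graph is connected via the edges in `S`. -/
def ConnectedVia (S : Set E) : Prop :=
  ∀ u v : V, Relation.ReflTransGen (G.Adj S) u v

def Connected : Prop := G.ConnectedVia Set.univ

/-- Degree of a vertex: the number of edge-endpoints at `v` (a loop counts twice). -/
def degree [Fintype E] [DecidableEq V] (v : V) : ℕ :=
  ∑ e : E, ((if (G.ends e).1 = v then 1 else 0) + (if (G.ends e).2 = v then 1 else 0))

end Multigraph

namespace Multigraph

variable {V E : Type} (G : Multigraph V E)

/-- Number of edge-endpoints of edges of `C` at the vertex `v` (a loop counts twice). -/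
def edgeCount [DecidableEq V] (C : Finset E) (v : V) : ℕ :=
  ∑ e ∈ C, ((if (G.ends e).1 = v then 1 else 0) + (if (G.ends e).2 = v then 1 else 0))

/-- `v` is an endpoint of some edge of `C`. -/
def Incident (C : Finset E) (v : V) : Prop :=
  ∃ e ∈ C, (G.ends e).1 = v ∨ (G.ends e).2 = v

/-- `C` is the edge set of a cycle: it is nonempty, every vertex meets either `0` or
exactly `2` edge-endpoints of `C`, and `C` is connected. -/
def IsCycle [DecidableEq V] (C : Finset E) : Prop :=
  C.Nonempty ∧ (∀ v : V, G.edgeCount C v = 0 ∨ G.edgeCount C v = 2) ∧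
    ∀ u w : V, G.Incident C u → G.Incident C w →
      Relation.ReflTransGen (G.Adj (↑C : Set E)) u w

end Multigraph

namespace Multigraph

variable {V E : Type}

/-- `IsWalk G vs es` : `vs` is the list of visited vertices and `es` the list of
traversed edges of a walk in `G`. -/
def IsWalk (G : Multigraph V E) : List V → List E → Prop
  | [_], [] => True
  | u :: w :: vs, e :: es =>
      (G.ends e = (u, w) ∨ G.ends e = (w, u)) ∧ IsWalk G (w :: vs) es
  | _, _ => False

/-- A path from `u` to `v` with vertex list `vs` and edge list `es`:
a walk with no repeated vertices and no repeated edges. -/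
def IsPath (G : Multigraph V E) (u v : V) (vs : List V) (es : List E) : Prop :=
  G.IsWalk vs es ∧ vs.Nodup ∧ es.Nodup ∧ vs.head? = some u ∧ vs.getLast? = some v

/-- `G` is 3-connected: any two distinct vertices are joined by three pairwise
internally disjoint paths (sharing no edges and no vertices besides the endpoints). -/
def ThreeConnected (G : Multigraph V E) : Prop :=
  ∀ u v : V, u ≠ v →
    ∃ p : Fin 3 → List V × List E,
      (∀ i, G.IsPath u v (p i).1 (p i).2) ∧
      ∀ i j, i ≠ j →
        (∀ x ∈ (p i).1, x ∈ (p j).1 → x = u ∨ x = v) ∧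
        (∀ e ∈ (p i).2, e ∉ (p j).2)

end Multigraph

namespace Multigraph

variable {V E : Type}

/-- The path metric: the infimum of total lengths of paths joining `u` to `v`. -/
noncomputable def dist (G : Multigraph V E) (ℓ : E → ℝ) (u v : V) : ℝ :=
  sInf {x : ℝ | ∃ (vs : List V) (es : List E), G.IsPath u v vs es ∧ x = (es.map ℓ).sum}

/-- A leaf is a vertex of degree 1. -/
def IsLeaf (G : Multigraph V E) [Fintype E] [DecidableEq V] (v : V) : Prop :=
  G.degree v = 1

/-- The graph is a tree: connected and without cycles. -/
def IsTree (G : Multigraph V E) [DecidableEq V] : Prop :=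
  G.Connected ∧ ∀ C : Finset E, ¬ G.IsCycle C

end Multigraph

/-!
In a tree the path between two vertices is unique, and its edges are exactly the edges `e`
whose removal separates the two vertices; distances are therefore sums over such cuts.
A vertex that is not a leaf has degree at least three, so it is the median of three leaves,
and the distance from the median `m` of `a, b, c` to any vertex `l` is a formula in the six
distances among `a, b, c, l`. Sending every leaf to its partner and every median of leaves to
the median of the partners thus gives a vertex map preserving all distances to leaves; the same
construction backwards inverts it, and it preserves all distances, because every pair `u, v`
extends to a geodesic `u, v, l` ending in a leaf. Finally, edges are the pairs of distinct
vertices with no third vertex between them, so the isometry carries edges to edges of the same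
length.
-/

namespace Multigraph

open scoped Classical

variable {V E : Type}

def Joins (G : Multigraph V E) (e : E) (x y : V) : Prop :=
  G.ends e = (x, y) ∨ G.ends e = (y, x)

def Inc (G : Multigraph V E) (e : E) (v : V) : Prop :=
  (G.ends e).1 = v ∨ (G.ends e).2 = v

variable {G : Multigraph V E} {e f : E} {u v w x y : V} {vs : List V} {es : List E}

lemma joins_ends (e : E) : G.Joins e (G.ends e).1 (G.ends e).2 := Or.inl rfl

lemma Joins.symm (h : G.Joins e x y) : G.Joins e y x := Or.symm h

lemma Joins.inc (h : G.Joins e x y) : G.Inc e x := by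
  rcases h with h | h <;> simp [Inc, h]

lemma Inc.exists_joins (h : G.Inc e v) : ∃ w, G.Joins e v w := by
  rcases h with h | h
  · exact ⟨_, Or.inl (Prod.ext h rfl)⟩
  · exact ⟨_, Or.inr (Prod.ext rfl h)⟩

lemma Adj.symm {S : Set E} (h : G.Adj S u v) : G.Adj S v u := by
  obtain ⟨e, he, h⟩ := h
  exact ⟨e, he, Joins.symm h⟩

lemma reflTransGen_adj_symm {S : Set E} (h : Relation.ReflTransGen (G.Adj S) u v) :
    Relation.ReflTransGen (G.Adj S) v u := by
  induction h with
  | refl => exact .refl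
  | tail _ hstep ih => exact .head hstep.symm ih

section Walk

@[simp] lemma isWalk_singleton_iff : G.IsWalk [v] es ↔ es = [] := by
  cases es <;> simp [IsWalk]

@[simp] lemma not_isWalk_cons_cons_nil : ¬ G.IsWalk (u :: w :: vs) [] := by
  simp [IsWalk]

lemma IsWalk.mem_of_mem_edges (h : G.IsWalk vs es) (he : e ∈ es) :
    (G.ends e).1 ∈ vs ∧ (G.ends e).2 ∈ vs := by
  induction vs, es using IsWalk.induct with
  | case1 => simp at he
  | case2 u w vs f es ih =>
    obtain ⟨hf, h⟩ := h
    rcases List.mem_cons.1 he with rfl | he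
    · rcases hf with hf | hf <;> simp [hf]
    · exact (ih h he).imp (List.mem_cons_of_mem u) (List.mem_cons_of_mem u)
  | case3 => simp_all [IsWalk]

lemma IsWalk.split (h : G.IsWalk (vs ++ x :: vs') es) :
    ∃ es₁ es₂, es = es₁ ++ es₂ ∧ G.IsWalk (vs ++ [x]) es₁ ∧ G.IsWalk (x :: vs') es₂ := by
  induction vs generalizing es with
  | nil => exact ⟨[], es, rfl, trivial, h⟩
  | cons u vs ih =>
    match vs, es, h with
    | [], f :: es, ⟨hf, h⟩ => exact ⟨[f], es, rfl, ⟨hf, trivial⟩, h⟩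
    | w :: vs, f :: es, ⟨hf, h⟩ =>
      obtain ⟨es₁, es₂, rfl, h₁, h₂⟩ := ih h
      exact ⟨f :: es₁, es₂, rfl, ⟨hf, h₁⟩, h₂⟩

lemma IsWalk.reflTransGen_head (h : G.IsWalk (u :: vs) es) (hx : x ∈ u :: vs) :
    Relation.ReflTransGen (G.Adj {f | f ∈ es}) u x := by
  induction vs generalizing u es with
  | nil =>
    obtain rfl : x = u := by simpa using hx
    exact .refl
  | cons w vs ih =>
    match es, h with
    | f :: es, ⟨hf, h⟩ =>
      rcases List.mem_cons.1 hx with rfl | hx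
      · exact .refl
      · refine .head ⟨f, List.mem_cons_self, hf⟩ (Relation.ReflTransGen.mono ?_ _ _ (ih h hx))
        rintro a b ⟨g, hg, hab⟩
        exact ⟨g, List.mem_cons_of_mem f hg, hab⟩

lemma IsWalk.reflTransGen (h : G.IsWalk vs es) (hx : x ∈ vs) (hy : y ∈ vs) :
    Relation.ReflTransGen (G.Adj {f | f ∈ es}) x y := by
  obtain _ | ⟨u, vs⟩ := vs
  · simp at hx
  · exact (reflTransGen_adj_symm (h.reflTransGen_head hx)).trans (h.reflTransGen_head hy)

end Walk

section Path

lemma IsPath.eq_cons (h : G.IsPath u v vs es) : ∃ vs', vs = u :: vs' := by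
  obtain _ | ⟨a, vs'⟩ := vs
  · simp [IsPath] at h
  · obtain rfl : a = u := by simpa using h.2.2.2.1
    exact ⟨vs', rfl⟩

lemma IsPath.mem_left (h : G.IsPath u v vs es) : u ∈ vs :=
  List.mem_of_mem_head? h.2.2.2.1

lemma IsPath.mem_right (h : G.IsPath u v vs es) : v ∈ vs :=
  List.mem_of_mem_getLast? h.2.2.2.2

lemma IsPath.nil_eq (h : G.IsPath u v vs []) : vs = [u] ∧ u = v := by
  obtain ⟨_ | ⟨w, vs⟩, rfl⟩ := h.eq_cons
  · simpa using h.2.2.2.2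
  · exact absurd h.1 not_isWalk_cons_cons_nil

lemma IsPath.eq_cons_cons (h : G.IsPath u v vs (f :: es)) :
    ∃ w vs', vs = u :: w :: vs' := by
  obtain ⟨_ | ⟨w, vs'⟩, rfl⟩ := h.eq_cons
  · simpa using h.1
  · exact ⟨w, vs', rfl⟩

lemma IsPath.tail (h : G.IsPath u v (u :: w :: vs) (f :: es)) :
    G.IsPath w v (w :: vs) es :=
  ⟨h.1.2, (List.nodup_cons.1 h.2.1).2, (List.nodup_cons.1 h.2.2.1).2, rfl,
    List.getLast?_cons_cons ▸ h.2.2.2.2⟩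

lemma IsPath.cons (h : G.IsPath w v vs es) (hu : u ∉ vs) (hj : G.Joins f u w) :
    G.IsPath u v (u :: vs) (f :: es) := by
  obtain ⟨vs, rfl⟩ := h.eq_cons
  have hf : f ∉ es := fun hf => hu <| by
    have := h.1.mem_of_mem_edges hf
    rcases hj with hj | hj <;> simp_all
  exact ⟨⟨hj, h.1⟩, List.nodup_cons.2 ⟨hu, h.2.1⟩, List.nodup_cons.2 ⟨hf, h.2.2.1⟩, rfl,
    by rw [List.getLast?_cons_cons]; exact h.2.2.2.2⟩

lemma IsPath.split (h : G.IsPath u v vs es) (hx : x ∈ vs) :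
    ∃ xs ys es₁ es₂, vs = xs ++ x :: ys ∧ es = es₁ ++ es₂ ∧
      G.IsPath u x (xs ++ [x]) es₁ ∧ G.IsPath x v (x :: ys) es₂ := by
  obtain ⟨xs, ys, rfl⟩ := List.append_of_mem hx
  obtain ⟨es₁, es₂, rfl, h₁, h₂⟩ := h.1.split
  obtain ⟨-, hvs, hes, hu, hv⟩ := h
  refine ⟨xs, ys, es₁, es₂, rfl, rfl, ⟨h₁, hvs.sublist ?_, hes.sublist (by simp), ?_, by simp⟩,
    ⟨h₂, hvs.sublist (by simp), hes.sublist (by simp), rfl, ?_⟩⟩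
  · simp
  · cases xs <;> simp_all
  · rw [List.getLast?_append_of_ne_nil _ (by simp)] at hv
    exact hv

lemma exists_isPath_of_reflTransGen {S : Set E} (h : Relation.ReflTransGen (G.Adj S) u v) :
    ∃ vs es, G.IsPath u v vs es ∧ ∀ e ∈ es, e ∈ S := by
  induction h using Relation.ReflTransGen.head_induction_on with
  | refl => exact ⟨[v], [], ⟨trivial, by simp, by simp, rfl, rfl⟩, by simp⟩
  | @head u w hadj _ ih =>
    obtain ⟨vs, es, hp, hS⟩ := ih
    obtain ⟨f, hfS, hf⟩ := hadj
    by_cases hu : u ∈ vs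
    · obtain ⟨xs, ys, es₁, es₂, -, rfl, -, hp₂⟩ := hp.split hu
      exact ⟨_, es₂, hp₂, fun e he => hS e (List.mem_append_right _ he)⟩
    · refine ⟨u :: vs, f :: es, hp.cons hu hf, ?_⟩
      rintro e (_ | ⟨_, he⟩)
      exacts [hfS, hS e he]

end Path

section Cycle

variable [DecidableEq V]

lemma Joins.endpoint_count (h : G.Joins e u w) (x : V) :
    ((if (G.ends e).1 = x then 1 else 0) + (if (G.ends e).2 = x then 1 else 0) : ℕ) =
      (if u = x then 1 else 0) + (if w = x then 1 else 0) := by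
  rcases h with h | h <;> simp [h, add_comm]

lemma edgeCount_insert {C : Finset E} (he : e ∉ C) (x : V) :
    G.edgeCount (insert e C) x =
      (if (G.ends e).1 = x then 1 else 0) + (if (G.ends e).2 = x then 1 else 0) +
        G.edgeCount C x := by
  simp [edgeCount, Finset.sum_insert he]

-- The endpoint terms make the identity hold for the trivial path as well.
lemma IsPath.edgeCount_add (h : G.IsPath u v vs es) (x : V) :
    G.edgeCount es.toFinset x + (if u = x then 1 else 0) + (if v = x then 1 else 0) =
      if x ∈ vs then 2 else 0 := by
  induction es generalizing u vs with
  | nil =>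
    obtain ⟨rfl, rfl⟩ := h.nil_eq
    by_cases hx : u = x
    · subst hx; simp [edgeCount]
    · simp [edgeCount, hx, Ne.symm hx]
  | cons f es ih =>
    obtain ⟨w, vs, rfl⟩ := h.eq_cons_cons
    have hf : f ∉ es.toFinset := by simpa using (List.nodup_cons.1 h.2.2.1).1
    have hu : u ∉ w :: vs := (List.nodup_cons.1 h.2.1).1
    have ih := ih h.tail
    rw [List.toFinset_cons, edgeCount_insert hf, Joins.endpoint_count h.1.1 x]
    by_cases hux : u = x
    · subst hux
      simp only [hu, if_false] at ih
      simp only [List.mem_cons_self, if_true]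
      omega
    · simp only [List.mem_cons, hux, if_false, Ne.symm hux, false_or] at ih ⊢
      split_ifs at ih ⊢ <;> omega

lemma IsPath.isCycle_insert (h : G.IsPath u v vs es) (he : e ∉ es) (hj : G.Joins e u v) :
    G.IsCycle (insert e es.toFinset) := by
  refine ⟨Finset.insert_nonempty _ _, fun x => ?_, ?_⟩
  · have := h.edgeCount_add x
    rw [edgeCount_insert (by simpa using he), hj.endpoint_count x]
    split_ifs at this ⊢ <;> omega
  · have hmem : ∀ x, G.Incident (insert e es.toFinset) x → x ∈ vs := by
      rintro x ⟨f, hf, hfx⟩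
      rcases Finset.mem_insert.1 hf with rfl | hf
      · rcases hj with hj | hj <;> rw [hj] at hfx <;> rcases hfx with rfl | rfl <;>
          simp [h.mem_left, h.mem_right]
      · have := h.1.mem_of_mem_edges (List.mem_toFinset.1 hf)
        rcases hfx with rfl | rfl <;> simp [this]
    intro x y hx hy
    refine Relation.ReflTransGen.mono ?_ _ _ (h.1.reflTransGen (hmem x hx) (hmem y hy))
    rintro a b ⟨f, hf, hab⟩
    exact ⟨f, by simp [hf], hab⟩

end Cycle

section Cut

/-- The component of `(G.ends e).1` in `G` minus `e`. In a tree, `sep u v`, the set of edges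
having `u` and `v` on different sides, is the edge set of the path from `u` to `v`. -/
def Side (G : Multigraph V E) (e : E) (v : V) : Prop :=
  Relation.ReflTransGen (G.Adj {f | f ≠ e}) (G.ends e).1 v

lemma not_side_snd [DecidableEq V] (htree : G.IsTree) (e : E) : ¬ G.Side e (G.ends e).2 := by
  intro hs
  obtain ⟨vs, es, hp, hS⟩ := exists_isPath_of_reflTransGen hs
  exact htree.2 _ (hp.isCycle_insert (fun he => hS e he rfl) (joins_ends e))

lemma exists_isPath [DecidableEq V] (htree : G.IsTree) (u v : V) :
    ∃ vs es, G.IsPath u v vs es := by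
  obtain ⟨vs, es, hp, -⟩ := exists_isPath_of_reflTransGen (htree.1 u v)
  exact ⟨vs, es, hp⟩

variable [Fintype E]

noncomputable def sep (G : Multigraph V E) (u v : V) : Finset E :=
  Finset.univ.filter fun e => ¬ (G.Side e u ↔ G.Side e v)

lemma mem_sep : e ∈ G.sep u v ↔ ¬ (G.Side e u ↔ G.Side e v) := by
  simp [sep]

lemma sep_comm (u v : V) : G.sep u v = G.sep v u := by
  ext e
  simp only [mem_sep]
  tauto

@[simp] lemma sep_self (u : V) : G.sep u u = ∅ := by
  ext e
  simp [mem_sep]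

lemma symmDiff_sep (u w v : V) : symmDiff (G.sep u w) (G.sep w v) = G.sep u v := by
  ext e
  simp only [Finset.mem_symmDiff, mem_sep]
  tauto

variable [DecidableEq V]

lemma sep_eq_singleton_of_joins (htree : G.IsTree) (h : G.Joins e x y) :
    G.sep x y = {e} := by
  ext f
  rw [mem_sep, Finset.mem_singleton]
  constructor
  · intro hf
    by_contra hfe
    have hadj : G.Adj {g | g ≠ f} x y := ⟨e, Ne.symm hfe, h⟩
    exact hf ⟨fun hx => hx.tail hadj, fun hy => hy.tail hadj.symm⟩
  · rintro rfl
    have h₁ : G.Side f (G.ends f).1 := .refl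
    have h₂ := not_side_snd htree f
    rcases h with h | h <;> rw [h] at h₁ h₂ <;> tauto

lemma IsPath.toFinset_eq_sep (htree : G.IsTree) (h : G.IsPath u v vs es) :
    es.toFinset = G.sep u v := by
  induction es generalizing u vs with
  | nil => simp [h.nil_eq.2]
  | cons f es ih =>
    obtain ⟨w, vs, rfl⟩ := h.eq_cons_cons
    have hf : f ∉ G.sep w v := by
      rw [← ih h.tail, List.mem_toFinset]
      exact (List.nodup_cons.1 h.2.2.1).1
    rw [List.toFinset_cons, ih h.tail, ← symmDiff_sep u w v,
      sep_eq_singleton_of_joins htree h.1.1]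
    ext g
    by_cases hg : g = f
    · subst hg; simp [Finset.mem_symmDiff, hf]
    · simp [Finset.mem_symmDiff, hg]

lemma sep_eq_empty_iff (htree : G.IsTree) : G.sep u v = ∅ ↔ u = v := by
  refine ⟨fun h => ?_, fun h => h ▸ sep_self u⟩
  obtain ⟨vs, es, hp⟩ := exists_isPath htree u v
  rw [← hp.toFinset_eq_sep htree, List.toFinset_eq_empty_iff] at h
  subst h
  exact hp.nil_eq.2

lemma exists_unique_inc_mem_sep (htree : G.IsTree) (h : u ≠ x) :
    ∃! e, G.Inc e u ∧ e ∈ G.sep u x := by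
  obtain ⟨vs, es, hp⟩ := exists_isPath htree u x
  rw [← hp.toFinset_eq_sep htree]
  obtain _ | ⟨f, es⟩ := es
  · exact absurd hp.nil_eq.2 h
  obtain ⟨w, vs, rfl⟩ := hp.eq_cons_cons
  refine ⟨f, ⟨Joins.inc hp.1.1, by simp⟩, ?_⟩
  rintro g ⟨hg, hgmem⟩
  rw [List.mem_toFinset, List.mem_cons] at hgmem
  refine hgmem.resolve_right fun hg' => (List.nodup_cons.1 hp.2.1).1 ?_
  have := hp.1.2.mem_of_mem_edges hg'
  rcases hg with hg | hg <;> rw [hg] at this <;> tauto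

lemma inc_mem_sep_unique (htree : G.IsTree) (he : G.Inc e u) (hes : e ∈ G.sep u x)
    (hf : G.Inc f u) (hfs : f ∈ G.sep u x) : e = f := by
  have hux : u ≠ x := by rintro rfl; simp at hes
  exact (exists_unique_inc_mem_sep htree hux).unique ⟨he, hes⟩ ⟨hf, hfs⟩

end Cut

section Between

variable [Fintype E]

/-- In a tree: `x` lies on the path from `u` to `v`. -/
def Between (G : Multigraph V E) (u x v : V) : Prop :=
  Disjoint (G.sep u x) (G.sep x v)

def IsMedian (G : Multigraph V E) (m a b c : V) : Prop :=
  G.Between a m b ∧ G.Between b m c ∧ G.Between a m c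

lemma between_iff_side :
    G.Between u x v ↔ ∀ e, (G.Side e u ↔ G.Side e x) ∨ (G.Side e x ↔ G.Side e v) := by
  simp only [Between, Finset.disjoint_left, mem_sep]
  exact ⟨fun h e => by have := @h e; tauto, fun h e => by have := h e; tauto⟩

lemma between_self_left (u v : V) : G.Between u u v := by
  simp [Between]

lemma between_self_right (u v : V) : G.Between u v v := by
  simp [Between]

lemma Between.symm (h : G.Between u x v) : G.Between v x u := by
  rw [Between, sep_comm v x, sep_comm x u]
  exact Disjoint.symm h

lemma Between.sep_eq_union (h : G.Between u x v) : G.sep u v = G.sep u x ∪ G.sep x v := by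
  rw [← symmDiff_sep u x v, h.symmDiff_eq_sup, Finset.sup_eq_union]

lemma Between.trans_left {a b m w : V} (hw : G.Between a w m) (hm : G.Between a m b) :
    G.Between a w b := by
  rw [between_iff_side] at *
  intro e
  have := hw e
  have := hm e
  tauto

variable [DecidableEq V]

lemma between_of_joins_mem_sep (htree : G.IsTree) {a : V} (hj : G.Joins e x w)
    (he : e ∈ G.sep x a) : G.Between x w a := by
  have hxw := sep_eq_singleton_of_joins htree hj
  have hew : e ∈ G.sep x w := by simp [hxw]
  rw [Between, hxw, Finset.disjoint_singleton_left]
  rw [mem_sep] at *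
  tauto

lemma IsPath.between (htree : G.IsTree) (h : G.IsPath u v vs es) (hx : x ∈ vs) :
    G.Between u x v := by
  obtain ⟨xs, ys, es₁, es₂, -, rfl, h₁, h₂⟩ := h.split hx
  rw [Between, ← h₁.toFinset_eq_sep htree, ← h₂.toFinset_eq_sep htree,
    List.disjoint_toFinset_iff_disjoint]
  exact List.disjoint_of_nodup_append h.2.2.1

lemma between_of_mem_sep (htree : G.IsTree) (hf : f ∈ G.sep u v) :
    G.Between u (G.ends f).1 v := by
  obtain ⟨vs, es, hp⟩ := exists_isPath htree u v
  rw [← hp.toFinset_eq_sep htree, List.mem_toFinset] at hf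
  exact hp.between htree (hp.1.mem_of_mem_edges hf).1

lemma IsPath.mem_of_between (htree : G.IsTree) (h : G.IsPath u v vs es)
    (hx : G.Between u x v) : x ∈ vs := by
  rcases eq_or_ne x u with rfl | hxu
  · exact h.mem_left
  obtain ⟨e, he, hes⟩ := (exists_unique_inc_mem_sep htree hxu).exists
  have : e ∈ es := by
    rw [← List.mem_toFinset, h.toFinset_eq_sep htree, hx.sep_eq_union, sep_comm]
    exact Finset.mem_union_left _ hes
  have := h.1.mem_of_mem_edges this
  rcases he with he | he <;> rw [he] at this <;> tauto

lemma between_total (htree : G.IsTree) {a b m p : V} (hm : G.Between a m b)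
    (hp : G.Between a p b) : G.Between a p m ∨ G.Between a m p := by
  obtain ⟨vs, es, hab⟩ := exists_isPath htree a b
  obtain ⟨xs, ys, es₁, es₂, hvs, -, ham, hmb⟩ := hab.split (hab.mem_of_between htree hm)
  have := hab.mem_of_between htree hp
  rw [hvs, List.mem_append] at this
  rcases this with hpx | hpy
  · exact .inl (ham.between htree (by simp [hpx]))
  · right
    have hmpb := hmb.between htree hpy
    rw [between_iff_side] at hm hmpb ⊢
    intro e
    have := hm e
    have := hmpb e
    tauto

lemma disjoint_sep_of_inc (htree : G.IsTree) {a b : V} (he : G.Inc e v) (ha : e ∈ G.sep v a)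
    (hb : e ∉ G.sep v b) : Disjoint (G.sep v a) (G.sep v b) := by
  obtain ⟨w, hj⟩ := he.exists_joins
  have hvw := sep_eq_singleton_of_joins htree hj
  rw [Finset.disjoint_left]
  intro f hfa hfb
  have hfw : f ∈ G.sep w a := by
    have : f ∉ G.sep v w := by
      rw [hvw, Finset.mem_singleton]
      rintro rfl
      exact hb hfb
    rw [mem_sep] at *
    tauto
  -- the endpoint `(G.ends f).1` lies both on the `v`–`b` path and on the `w`–`a` path
  have h₁ := between_iff_side.1 (between_of_mem_sep htree hfb) e
  have h₂ := between_iff_side.1 (between_of_mem_sep htree hfw) e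
  have hew : e ∈ G.sep v w := by simp [hvw]
  rw [mem_sep] at ha hb hew
  tauto

lemma between_of_inc_mem_sep (htree : G.IsTree) {a b : V} (he : G.Inc e v) (hf : G.Inc f v)
    (hef : e ≠ f) (ha : e ∈ G.sep v a) (hb : f ∈ G.sep v b) : G.Between a v b := by
  have : e ∉ G.sep v b := fun h => hef (inc_mem_sep_unique htree he h hf hb)
  rw [Between, sep_comm a v]
  exact disjoint_sep_of_inc htree he ha this

lemma between_of_forall_card_le (htree : G.IsTree) {c m x : V}
    (hmin : ∀ w, G.Between m w x → (G.sep m c).card ≤ (G.sep w c).card) :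
    G.Between x m c := by
  rcases eq_or_ne m c with rfl | hmc
  · exact between_self_right x m
  obtain ⟨e, he, hec⟩ := (exists_unique_inc_mem_sep htree hmc).exists
  suffices hex : e ∉ G.sep m x by
    rw [Between, sep_comm x m]
    exact (disjoint_sep_of_inc htree he hec hex).symm
  intro hex
  obtain ⟨w, hj⟩ := he.exists_joins
  have hwc : G.sep w c = (G.sep m c).erase e := by
    rw [← symmDiff_sep w m c, sep_comm w m, sep_eq_singleton_of_joins htree hj]
    ext g
    by_cases hg : g = e
    · subst hg; simp [Finset.mem_symmDiff, hec]
    · simp [Finset.mem_symmDiff, hg]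
  have := hmin w (between_of_joins_mem_sep htree hj hex)
  rw [hwc] at this
  exact (Finset.card_erase_lt_of_mem hec).not_ge this

lemma exists_isMedian [Fintype V] (htree : G.IsTree) (a b c : V) : ∃ m, G.IsMedian m a b c := by
  -- `m` is the vertex of the `a`–`b` path nearest to `c`
  obtain ⟨m, hm, hmin⟩ := Finset.exists_min_image (Finset.univ.filter (G.Between a · b))
    (fun m => (G.sep m c).card) ⟨a, by simp [between_self_left]⟩
  simp only [Finset.mem_filter, Finset.mem_univ, true_and] at hm hmin
  refine ⟨m, hm, between_of_forall_card_le htree fun w hw => hmin w ?_,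
    between_of_forall_card_le htree fun w hw => hmin w ?_⟩
  · exact (hw.symm.trans_left hm.symm).symm
  · exact hw.symm.trans_left hm

end Between

section Leaves

variable [Fintype E] [DecidableEq V]

lemma degree_eq_card (htree : G.IsTree) (v : V) :
    G.degree v = (Finset.univ.filter (G.Inc · v)).card := by
  rw [degree, Finset.card_eq_sum_ones, Finset.sum_filter]
  refine Finset.sum_congr rfl fun e _ => ?_
  have : (G.ends e).1 ≠ (G.ends e).2 := fun h => not_side_snd htree e (h ▸ .refl)
  unfold Inc
  by_cases h₁ : (G.ends e).1 = v <;> by_cases h₂ : (G.ends e).2 = v <;> simp_all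

lemma one_lt_degree (htree : G.IsTree) (hv : ¬ G.IsLeaf v) (he : G.Inc e v) :
    1 < G.degree v := by
  have : 0 < G.degree v := by
    rw [degree_eq_card htree, Finset.card_pos]
    exact ⟨e, by simp [he]⟩
  exact lt_of_le_of_ne this (Ne.symm hv)

lemma exists_inc [Nontrivial V] (htree : G.IsTree) (v : V) : ∃ e, G.Inc e v := by
  obtain ⟨u, hu⟩ := exists_ne v
  obtain ⟨e, he, -⟩ := (exists_unique_inc_mem_sep htree hu.symm).exists
  exact ⟨e, he⟩

lemma exists_inc_notMem_sep (htree : G.IsTree) (hv : 1 < G.degree v) (u : V) :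
    ∃ f, G.Inc f v ∧ f ∉ G.sep v u := by
  rw [degree_eq_card htree, Finset.one_lt_card] at hv
  obtain ⟨e, he, f, hf, hef⟩ := hv
  simp only [Finset.mem_filter, Finset.mem_univ, true_and] at he hf
  by_contra! H
  exact hef (inc_mem_sep_unique htree he (H e he) hf (H f hf))

variable [Fintype V]

lemma exists_isLeaf_mem_sep (htree : G.IsTree) (he : G.Inc e v) :
    ∃ a, G.IsLeaf a ∧ e ∈ G.sep v a := by
  -- a vertex beyond `e` that is farthest from `v` is a leaf
  obtain ⟨w, hj⟩ := he.exists_joins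
  obtain ⟨x, hx, hmax⟩ := Finset.exists_max_image (Finset.univ.filter (e ∈ G.sep v ·))
    (fun x => (G.sep v x).card) ⟨w, by simp [sep_eq_singleton_of_joins htree hj]⟩
  simp only [Finset.mem_filter, Finset.mem_univ, true_and] at hx hmax
  refine ⟨x, by_contra fun hleaf => ?_, hx⟩
  have hxv : x ≠ v := by rintro rfl; simp at hx
  obtain ⟨f, hf, -⟩ := (exists_unique_inc_mem_sep htree hxv).exists
  obtain ⟨g, hg, hgx⟩ := exists_inc_notMem_sep htree (one_lt_degree htree hleaf hf) v
  obtain ⟨y, hgy⟩ := hg.exists_joins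
  have hvy : G.sep v y = insert g (G.sep v x) := by
    rw [← symmDiff_sep v x y, sep_eq_singleton_of_joins htree hgy, sep_comm x v] at *
    ext g'
    by_cases h : g' = g
    · subst h; simp [Finset.mem_symmDiff, hgx]
    · simp [Finset.mem_symmDiff, h]
  have := hmax y (by simp [hvy, hx])
  rw [hvy, Finset.card_insert_of_notMem (by rwa [sep_comm])] at this
  omega

lemma exists_isLeaf_between [Nontrivial V] (htree : G.IsTree) (u v : V) :
    ∃ l, G.IsLeaf l ∧ G.Between u v l := by
  by_cases hv : G.IsLeaf v
  · exact ⟨v, hv, between_self_right u v⟩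
  obtain ⟨e, he⟩ := exists_inc htree v
  obtain ⟨f, hf, hfu⟩ := exists_inc_notMem_sep htree (one_lt_degree htree hv he) u
  obtain ⟨l, hl, hfl⟩ := exists_isLeaf_mem_sep htree hf
  refine ⟨l, hl, ?_⟩
  rw [Between, sep_comm u v]
  exact (disjoint_sep_of_inc htree hf hfl hfu).symm

lemma exists_isLeaf_isMedian [Nontrivial V] (htree : G.IsTree) (hdeg : ∀ x, G.degree x ≠ 2)
    (hv : ¬ G.IsLeaf v) :
    ∃ a b c, G.IsLeaf a ∧ G.IsLeaf b ∧ G.IsLeaf c ∧ G.IsMedian v a b c := by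
  obtain ⟨e, he⟩ := exists_inc htree v
  have : 2 < (Finset.univ.filter (G.Inc · v)).card := by
    rw [← degree_eq_card htree]
    exact lt_of_le_of_ne (one_lt_degree htree hv he) (Ne.symm (hdeg v))
  obtain ⟨e₁, h₁, e₂, h₂, e₃, h₃, h₁₂, h₁₃, h₂₃⟩ := Finset.two_lt_card.1 this
  simp only [Finset.mem_filter, Finset.mem_univ, true_and] at h₁ h₂ h₃
  obtain ⟨a, ha, hea⟩ := exists_isLeaf_mem_sep htree h₁
  obtain ⟨b, hb, heb⟩ := exists_isLeaf_mem_sep htree h₂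
  obtain ⟨c, hc, hec⟩ := exists_isLeaf_mem_sep htree h₃
  exact ⟨a, b, c, ha, hb, hc, between_of_inc_mem_sep htree h₁ h₂ h₁₂ hea heb,
    between_of_inc_mem_sep htree h₂ h₃ h₂₃ heb hec, between_of_inc_mem_sep htree h₁ h₃ h₁₃ hea hec⟩

end Leaves

section Metric

variable [Fintype E] (ℓ : E → ℝ)

noncomputable def len (G : Multigraph V E) (ℓ : E → ℝ) (u v : V) : ℝ :=
  ∑ e ∈ G.sep u v, ℓ e

/-- The Gromov product `(x | y)_w`. -/
noncomputable def gromov (G : Multigraph V E) (ℓ : E → ℝ) (w x y : V) : ℝ :=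
  (G.len ℓ w x + G.len ℓ w y - G.len ℓ x y) / 2

lemma len_comm (u v : V) : G.len ℓ u v = G.len ℓ v u := by
  rw [len, len, sep_comm]

lemma len_add_len (u x v : V) :
    G.len ℓ u x + G.len ℓ x v = G.len ℓ u v + 2 * ∑ e ∈ G.sep u x ∩ G.sep x v, ℓ e := by
  rw [len, len, len, ← symmDiff_sep u x v, ← Finset.sum_union_inter,
    symmDiff_eq_sup_sdiff_inf, Finset.sup_eq_union, Finset.inf_eq_inter,
    ← Finset.sum_sdiff (Finset.inter_subset_left.trans Finset.subset_union_left)]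
  ring

variable {ℓ}

lemma len_nonneg (hℓ : ∀ e, 0 ≤ ℓ e) (u v : V) : 0 ≤ G.len ℓ u v :=
  Finset.sum_nonneg fun e _ => hℓ e

lemma len_le_len_add_len (hℓ : ∀ e, 0 ≤ ℓ e) (u w v : V) :
    G.len ℓ u v ≤ G.len ℓ u w + G.len ℓ w v := by
  have := Finset.sum_nonneg fun e (_ : e ∈ G.sep u w ∩ G.sep w v) => hℓ e
  linarith [len_add_len (G := G) ℓ u w v]

lemma Between.len_add (h : G.Between u x v) : G.len ℓ u x + G.len ℓ x v = G.len ℓ u v := by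
  rw [len_add_len, Finset.disjoint_iff_inter_eq_empty.1 h]
  simp

lemma between_iff_len (hℓ : ∀ e, 0 < ℓ e) :
    G.Between u x v ↔ G.len ℓ u x + G.len ℓ x v = G.len ℓ u v := by
  refine ⟨Between.len_add, fun h => ?_⟩
  rw [len_add_len] at h
  have hz : ∑ e ∈ G.sep u x ∩ G.sep x v, ℓ e = 0 := by linarith
  rw [Finset.sum_eq_zero_iff_of_nonneg fun e _ => (hℓ e).le] at hz
  rw [Between, Finset.disjoint_iff_inter_eq_empty, Finset.eq_empty_iff_forall_notMem]
  exact fun e he => (hℓ e).ne' (hz e he)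

lemma IsMedian.len_eq_gromov {m a b c : V} (hm : G.IsMedian m a b c) :
    G.len ℓ a m = G.gromov ℓ a b c := by
  obtain ⟨h₁, h₂, h₃⟩ := hm
  rw [gromov]
  linarith [h₁.len_add (ℓ := ℓ), h₂.len_add (ℓ := ℓ), h₃.len_add (ℓ := ℓ), len_comm (G := G) ℓ m b]

variable [DecidableEq V]

lemma IsPath.sum_eq_len (htree : G.IsTree) (h : G.IsPath u v vs es) :
    (es.map ℓ).sum = G.len ℓ u v := by
  rw [len, ← h.toFinset_eq_sep htree, List.sum_toFinset _ h.2.2.1]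

lemma dist_eq_len (htree : G.IsTree) (u v : V) : G.dist ℓ u v = G.len ℓ u v := by
  obtain ⟨vs, es, hp⟩ := exists_isPath htree u v
  have : {x | ∃ vs es, G.IsPath u v vs es ∧ x = (es.map ℓ).sum} = {G.len ℓ u v} := by
    ext x
    constructor
    · rintro ⟨vs, es, hp, rfl⟩
      exact hp.sum_eq_len htree
    · rintro rfl
      exact ⟨vs, es, hp, (hp.sum_eq_len htree).symm⟩
  rw [dist, this, csInf_singleton]

lemma len_eq_zero_iff (htree : G.IsTree) (hℓ : ∀ e, 0 < ℓ e) : G.len ℓ u v = 0 ↔ u = v := by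
  rw [len, Finset.sum_eq_zero_iff_of_nonneg fun e _ => (hℓ e).le, ← sep_eq_empty_iff htree,
    Finset.eq_empty_iff_forall_notMem]
  exact ⟨fun h e he => (hℓ e).ne' (h e he), fun h e he => absurd he (h e)⟩

lemma Joins.len_eq (htree : G.IsTree) (h : G.Joins e x y) : G.len ℓ x y = ℓ e := by
  rw [len, sep_eq_singleton_of_joins htree h, Finset.sum_singleton]

lemma IsMedian.len_eq [Fintype V] (htree : G.IsTree) (hℓ : ∀ e, 0 ≤ ℓ e) {m a b c : V}
    (hm : G.IsMedian m a b c) (l : V) :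
    G.len ℓ m l = |G.gromov ℓ a b c - G.gromov ℓ a b l| + G.gromov ℓ l a b := by
  -- `p` is where the path from `l` meets the `a`–`b` path, on which `m` lies too
  obtain ⟨p, hp⟩ := exists_isMedian htree a b l
  have hpl : G.len ℓ p l = G.gromov ℓ l a b := by
    obtain ⟨h₁, h₂, h₃⟩ := hp
    rw [gromov]
    linarith [h₁.len_add (ℓ := ℓ), h₂.len_add (ℓ := ℓ), h₃.len_add (ℓ := ℓ),
      len_comm (G := G) ℓ l a, len_comm (G := G) ℓ l b, len_comm (G := G) ℓ p b]
  rw [← hm.len_eq_gromov, ← hp.len_eq_gromov, ← hpl]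
  rcases between_total htree hm.1 hp.1 with hpm | hmp
  · have hmpl : G.Between m p l := by
      have h₁ := between_iff_side.1 hpm
      have h₂ := between_iff_side.1 hm.1
      have h₃ := between_iff_side.1 hp.2.1
      exact between_iff_side.2 fun e => by have := h₁ e; have := h₂ e; have := h₃ e; tauto
    rw [← hmpl.len_add, ← hpm.len_add, len_comm ℓ m p, add_sub_cancel_left,
      abs_of_nonneg (len_nonneg hℓ p m)]
  · have hmpl : G.Between m p l := by
      have h₁ := between_iff_side.1 hmp
      have h₂ := between_iff_side.1 hp.2.2
      exact between_iff_side.2 fun e => by have := h₁ e; have := h₂ e; tauto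
    rw [← hmpl.len_add, ← hmp.len_add, sub_add_cancel_left, abs_neg,
      abs_of_nonneg (len_nonneg hℓ m p)]

variable [Fintype V] [Nontrivial V]

lemma eq_of_len_isLeaf (htree : G.IsTree) (hℓ : ∀ e, 0 < ℓ e)
    (h : ∀ l, G.IsLeaf l → G.len ℓ x l = G.len ℓ y l) : x = y := by
  obtain ⟨l, hl, hb⟩ := exists_isLeaf_between htree x y
  have := hb.len_add (ℓ := ℓ)
  rw [h l hl] at this
  exact (len_eq_zero_iff htree hℓ).1 (by linarith)

end Metric

section Edges

variable [Fintype E] [DecidableEq V]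

lemma exists_joins_iff (htree : G.IsTree) :
    (∃ e, G.Joins e x y) ↔ x ≠ y ∧ ∀ z, G.Between x z y → z = x ∨ z = y := by
  constructor
  · rintro ⟨e, he⟩
    have hxy := sep_eq_singleton_of_joins htree he
    refine ⟨by rintro rfl; simp at hxy, fun z hz => ?_⟩
    have hxz : G.sep x z ⊆ {e} := by rw [← hxy, hz.sep_eq_union]; exact Finset.subset_union_left
    have hzy : G.sep z y ⊆ {e} := by rw [← hxy, hz.sep_eq_union]; exact Finset.subset_union_right
    rcases Finset.subset_singleton_iff.1 hxz with hxz | hxz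
    · exact .inl ((sep_eq_empty_iff htree).1 hxz).symm
    rcases Finset.subset_singleton_iff.1 hzy with hzy | hzy
    · exact .inr ((sep_eq_empty_iff htree).1 hzy)
    · simp [Between, hxz, hzy] at hz
  · rintro ⟨hxy, hz⟩
    obtain ⟨e, he, hes⟩ := (exists_unique_inc_mem_sep htree hxy).exists
    obtain ⟨w, hj⟩ := he.exists_joins
    rcases hz w (between_of_joins_mem_sep htree hj hes) with rfl | rfl
    · simpa using sep_eq_singleton_of_joins htree hj
    · exact ⟨e, hj⟩

lemma Joins.unique (htree : G.IsTree) (h : G.Joins e x y) (h' : G.Joins f x y) : e = f := by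
  have := (sep_eq_singleton_of_joins htree h).symm.trans (sep_eq_singleton_of_joins htree h')
  simpa using this

end Edges

section Transport

variable {V₁ E₁ V₂ E₂ : Type} [Fintype E₁] [Fintype E₂]
  {G₁ : Multigraph V₁ E₁} {G₂ : Multigraph V₂ E₂} {ℓ₁ : E₁ → ℝ} {ℓ₂ : E₂ → ℝ}

lemma len_le_len_of_len_isLeaf [Fintype V₁] [DecidableEq V₁] [Nontrivial V₁]
    (htree₁ : G₁.IsTree) (hℓ₂ : ∀ e, 0 ≤ ℓ₂ e) {F : V₁ → V₂} {ψ : {v // G₁.IsLeaf v} → V₂}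
    (hF : ∀ v l, G₂.len ℓ₂ (F v) (ψ l) = G₁.len ℓ₁ v l) (u v : V₁) :
    G₁.len ℓ₁ u v ≤ G₂.len ℓ₂ (F u) (F v) := by
  obtain ⟨l, hl, hb⟩ := exists_isLeaf_between htree₁ u v
  linarith [hb.len_add (ℓ := ℓ₁), hF u ⟨l, hl⟩, hF v ⟨l, hl⟩,
    len_le_len_add_len (G := G₂) hℓ₂ (F u) (F v) (ψ ⟨l, hl⟩)]

/-- A leaf of `G₁` goes to `ψ` of itself; an internal vertex, being the median of three leaves,
goes to the median of their images. -/
lemma exists_len_isLeaf_eq [Fintype V₁] [DecidableEq V₁] [Nontrivial V₁] [Fintype V₂]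
    [DecidableEq V₂] (htree₁ : G₁.IsTree) (hℓ₁ : ∀ e, 0 ≤ ℓ₁ e) (hdeg₁ : ∀ x, G₁.degree x ≠ 2)
    (htree₂ : G₂.IsTree) (hℓ₂ : ∀ e, 0 ≤ ℓ₂ e) (ψ : {v // G₁.IsLeaf v} → V₂)
    (hψ : ∀ a b, G₂.len ℓ₂ (ψ a) (ψ b) = G₁.len ℓ₁ a b) (v : V₁) :
    ∃ w, ∀ l, G₂.len ℓ₂ w (ψ l) = G₁.len ℓ₁ v l := by
  by_cases hv : G₁.IsLeaf v
  · exact ⟨ψ ⟨v, hv⟩, hψ ⟨v, hv⟩⟩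
  obtain ⟨a, b, c, ha, hb, hc, hm⟩ := exists_isLeaf_isMedian htree₁ hdeg₁ hv
  obtain ⟨w, hw⟩ := exists_isMedian htree₂ (ψ ⟨a, ha⟩) (ψ ⟨b, hb⟩) (ψ ⟨c, hc⟩)
  refine ⟨w, fun l => ?_⟩
  rw [hw.len_eq htree₂ hℓ₂, hm.len_eq htree₁ hℓ₁]
  simp only [gromov, hψ]

lemma exists_equiv_len_eq [Fintype V₁] [DecidableEq V₁] [Nontrivial V₁] [Fintype V₂]
    [DecidableEq V₂] [Nontrivial V₂] (htree₁ : G₁.IsTree) (hℓ₁ : ∀ e, 0 < ℓ₁ e)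
    (hdeg₁ : ∀ x, G₁.degree x ≠ 2) (htree₂ : G₂.IsTree) (hℓ₂ : ∀ e, 0 < ℓ₂ e)
    (hdeg₂ : ∀ x, G₂.degree x ≠ 2) (φ : {v // G₁.IsLeaf v} ≃ {v // G₂.IsLeaf v})
    (hφ : ∀ a b, G₂.len ℓ₂ (φ a) (φ b) = G₁.len ℓ₁ a b) :
    ∃ F : V₁ ≃ V₂, ∀ u v, G₂.len ℓ₂ (F u) (F v) = G₁.len ℓ₁ u v := by
  have hφ' : ∀ a b, G₁.len ℓ₁ (φ.symm a) (φ.symm b) = G₂.len ℓ₂ a b := fun a b => by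
    simpa using (hφ (φ.symm a) (φ.symm b)).symm
  choose F hF using exists_len_isLeaf_eq htree₁ (fun e => (hℓ₁ e).le) hdeg₁ htree₂
    (fun e => (hℓ₂ e).le) (fun l => φ l) hφ
  choose F' hF' using exists_len_isLeaf_eq htree₂ (fun e => (hℓ₂ e).le) hdeg₂ htree₁
    (fun e => (hℓ₁ e).le) (fun l => φ.symm l) hφ'
  have hF'F (v : V₁) : F' (F v) = v := eq_of_len_isLeaf htree₁ hℓ₁ fun l hl => by
    simpa [hF] using hF' (F v) (φ ⟨l, hl⟩)
  have hFF' (w : V₂) : F (F' w) = w := eq_of_len_isLeaf htree₂ hℓ₂ fun l hl => by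
    simpa [hF'] using hF (F' w) (φ.symm ⟨l, hl⟩)
  refine ⟨⟨F, F', hF'F, hFF'⟩, fun u v => le_antisymm ?_ (len_le_len_of_len_isLeaf htree₁
    (fun e => (hℓ₂ e).le) hF u v)⟩
  simpa [hF'F] using len_le_len_of_len_isLeaf htree₂ (fun e => (hℓ₁ e).le) hF' (F u) (F v)

lemma exists_joins_map [DecidableEq V₁] [DecidableEq V₂] (htree₁ : G₁.IsTree)
    (hℓ₁ : ∀ e, 0 < ℓ₁ e) (htree₂ : G₂.IsTree) (hℓ₂ : ∀ e, 0 < ℓ₂ e) (F : V₁ ≃ V₂)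
    (hF : ∀ u v, G₂.len ℓ₂ (F u) (F v) = G₁.len ℓ₁ u v) {e : E₁} {x y : V₁}
    (h : G₁.Joins e x y) : ∃ f, G₂.Joins f (F x) (F y) := by
  obtain ⟨hxy, hbtw⟩ := (exists_joins_iff htree₁).1 ⟨e, h⟩
  refine (exists_joins_iff htree₂).2 ⟨F.injective.ne hxy, fun z hz => ?_⟩
  obtain ⟨z, rfl⟩ := F.surjective z
  rw [between_iff_len hℓ₂, hF, hF, hF, ← between_iff_len hℓ₁] at hz
  simpa using hbtw z hz

lemma exists_edge_equiv [DecidableEq V₁] [DecidableEq V₂] (htree₁ : G₁.IsTree)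
    (hℓ₁ : ∀ e, 0 < ℓ₁ e) (htree₂ : G₂.IsTree) (hℓ₂ : ∀ e, 0 < ℓ₂ e) (F : V₁ ≃ V₂)
    (hF : ∀ u v, G₂.len ℓ₂ (F u) (F v) = G₁.len ℓ₁ u v) :
    ∃ fE : E₁ ≃ E₂, (∀ e, G₂.Joins (fE e) (F (G₁.ends e).1) (F (G₁.ends e).2)) ∧
      ∀ e, ℓ₂ (fE e) = ℓ₁ e := by
  have hF' : ∀ u v, G₁.len ℓ₁ (F.symm u) (F.symm v) = G₂.len ℓ₂ u v := fun u v => by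
    simpa using (hF (F.symm u) (F.symm v)).symm
  choose fE hfE using fun e => exists_joins_map htree₁ hℓ₁ htree₂ hℓ₂ F hF (joins_ends e)
  choose gE hgE using fun e => exists_joins_map htree₂ hℓ₂ htree₁ hℓ₁ F.symm hF' (joins_ends e)
  have hgf (e : E₁) : gE (fE e) = e := by
    refine Joins.unique htree₁ ?_ (joins_ends e)
    have := hgE (fE e)
    rcases hfE e with h | h <;> rw [h] at this <;> simp only [Equiv.symm_apply_apply] at this
    exacts [this, this.symm]
  have hfg (e : E₂) : fE (gE e) = e := by
    refine Joins.unique htree₂ ?_ (joins_ends e)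
    have := hfE (gE e)
    rcases hgE e with h | h <;> rw [h] at this <;> simp only [Equiv.apply_symm_apply] at this
    exacts [this, this.symm]
  refine ⟨⟨fE, gE, hgf, hfg⟩, hfE, fun e => ?_⟩
  change ℓ₂ (fE e) = ℓ₁ e
  rw [← (hfE e).len_eq (ℓ := ℓ₂) htree₂, hF, (joins_ends e).len_eq htree₁]

end Transport

end Multigraph

/-- A finite metric tree with no degree-2 vertices (and at least two leaves) is
determined up to isometric isomorphism by the pairwise distances between its leaves:
if the leaf sets of two such trees are in a distance-preserving bijection, then
there is an isomorphism of the underlying combinatorial trees preserving all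
edge lengths. -/
theorem metric_tree_determined_by_leaf_distances
    {V₁ E₁ V₂ E₂ : Type} [Fintype V₁] [Fintype E₁] [Fintype V₂] [Fintype E₂]
    [DecidableEq V₁] [DecidableEq V₂]
    (G₁ : Multigraph V₁ E₁) (G₂ : Multigraph V₂ E₂)
    (ℓ₁ : E₁ → ℝ) (ℓ₂ : E₂ → ℝ) (hℓ₁ : ∀ e, 0 < ℓ₁ e) (hℓ₂ : ∀ e, 0 < ℓ₂ e)
    (htree₁ : G₁.IsTree) (htree₂ : G₂.IsTree)
    (hdeg₁ : ∀ v, G₁.degree v ≠ 2) (hdeg₂ : ∀ v, G₂.degree v ≠ 2)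
    (hleaves₁ : ∃ a b : V₁, G₁.IsLeaf a ∧ G₁.IsLeaf b ∧ a ≠ b)
    (φ : {v : V₁ // G₁.IsLeaf v} ≃ {v : V₂ // G₂.IsLeaf v})
    (hφ : ∀ a b : {v : V₁ // G₁.IsLeaf v},
      G₂.dist ℓ₂ (φ a) (φ b) = G₁.dist ℓ₁ (a : V₁) (b : V₁)) :
    ∃ (fV : V₁ ≃ V₂) (fE : E₁ ≃ E₂),
      (∀ e : E₁,
        G₂.ends (fE e) = (fV (G₁.ends e).1, fV (G₁.ends e).2) ∨
        G₂.ends (fE e) = (fV (G₁.ends e).2, fV (G₁.ends e).1)) ∧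
      (∀ e : E₁, ℓ₂ (fE e) = ℓ₁ e) := by
  obtain ⟨a, b, ha, hb, hab⟩ := hleaves₁
  have : Nontrivial V₁ := ⟨a, b, hab⟩
  have : Nontrivial V₂ := ⟨φ ⟨a, ha⟩, φ ⟨b, hb⟩, fun h => hab <| by
    simpa using φ.injective (Subtype.ext h)⟩
  have hφ' : ∀ a b, G₂.len ℓ₂ (φ a) (φ b) = G₁.len ℓ₁ a b := fun a b => by
    rw [← Multigraph.dist_eq_len htree₁, ← Multigraph.dist_eq_len htree₂, hφ]
  obtain ⟨F, hF⟩ := Multigraph.exists_equiv_len_eq htree₁ hℓ₁ hdeg₁ htree₂ hℓ₂ hdeg₂ φ hφ'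
  obtain ⟨fE, hends, hlen⟩ := Multigraph.exists_edge_equiv htree₁ hℓ₁ htree₂ hℓ₂ F hF
  exact ⟨F, fE, hends, hlen⟩
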